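/- If there exists any LPTS L consistent with finite sets 𝒫 of positive and 𝒩 of negative stochastic tree samples (i.e., P ⪯ L for all P ∈ 𝒫 and N ⪯̸ L for all N ∈ 𝒩), then the LPTS L_𝒫 obtained by merging the start states of all trees in 𝒫 is also consistent with 𝒫 and 𝒩. -/

import Mathlib

open Finset

/-- A discrete probability distribution on a finite set `S`, with rational values. -/
structure PDist (S : Type) [Fintype S] where
  prob : S → ℚ
  nonneg : ∀ s, 0 ≤ prob s
  sum_one : ∑ s, prob s = 1

/-- The lifting `μ₁ ⊑_R μ₂` of a relation `R` to distributions, via a weight function. -/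
def DistLe {S₁ S₂ : Type} [Fintype S₁] [Fintype S₂]
    (R : S₁ → S₂ → Prop) (μ₁ : PDist S₁) (μ₂ : PDist S₂) : Prop :=
  ∃ w : S₁ → S₂ → ℚ,
    (∀ s₁ s₂, 0 ≤ w s₁ s₂ ∧ w s₁ s₂ ≤ 1) ∧
    (∀ s₁, μ₁.prob s₁ = ∑ s₂, w s₁ s₂) ∧
    (∀ s₂, μ₂.prob s₂ = ∑ s₁, w s₁ s₂) ∧
    (∀ s₁ s₂, 0 < w s₁ s₂ → R s₁ s₂)

/-- A labeled probabilistic transition system over states `S` and actions `A`. -/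
structure LPTS (S A : Type) [Fintype S] where
  start : S
  trans : S → A → PDist S → Prop

/-- `R` is a strong simulation between `L₁` and `L₂`. -/
def IsStrongSim {S₁ S₂ A : Type} [Fintype S₁] [Fintype S₂]
    (L₁ : LPTS S₁ A) (L₂ : LPTS S₂ A) (R : S₁ → S₂ → Prop) : Prop :=
  ∀ s₁ s₂, R s₁ s₂ → ∀ a μ₁, L₁.trans s₁ a μ₁ →
    ∃ μ₂, L₂.trans s₂ a μ₂ ∧ DistLe R μ₁ μ₂

/-- `L₁ ⪯ L₂`: simulation conformance. -/
def Sim {S₁ S₂ A : Type} [Fintype S₁] [Fintype S₂]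
    (L₁ : LPTS S₁ A) (L₂ : LPTS S₂ A) : Prop :=
  ∃ R, IsStrongSim L₁ L₂ R ∧ R L₁.start L₂.start

/-- A stochastic tree: the start state is in the support of no distribution, and every
other state is in the support of exactly one distribution appearing in a transition. -/
def IsTree {S A : Type} [Fintype S] (L : LPTS S A) : Prop :=
  (∀ s a μ, L.trans s a μ → μ.prob L.start = 0) ∧
  (∀ t, t ≠ L.start → ∃! μ : PDist S, (∃ s a, L.trans s a μ) ∧ 0 < μ.prob t)

open scoped Classical

/-- `ν` is the copy of the distribution `μ` of tree `i` on the merged state space. -/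
def liftSum {ι : Type} {St : ι → Type} [Fintype ι] [∀ i, Fintype (St i)]
    (i : ι) (μ : PDist (St i)) (ν : PDist (Unit ⊕ Σ j, St j)) : Prop :=
  (∀ s' : St i, ν.prob (Sum.inr ⟨i, s'⟩) = μ.prob s') ∧
  (∀ x, (∀ s' : St i, x ≠ Sum.inr ⟨i, s'⟩) → ν.prob x = 0)

/-- The LPTS `L_𝒫` obtained by merging the start states of all trees in the family `P`:
the new start state inherits the transitions of every tree's start state, and all other
states keep their transitions. -/
def mergedLPTS {ι : Type} {St : ι → Type} [Fintype ι] [∀ i, Fintype (St i)] {A : Type}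
    (P : ∀ i, LPTS (St i) A) : LPTS (Unit ⊕ Σ j, St j) A where
  start := Sum.inl ()
  trans := fun x a ν => ∃ i s μ, (P i).trans s a μ ∧ liftSum i μ ν ∧
    ((x = Sum.inl () ∧ s = (P i).start) ∨ x = Sum.inr ⟨i, s⟩)

/-! The positive trees embed into `L_𝒫` by identity on states, with every tree's start state
sent to the merged start state, so `P ⪯ L_𝒫`. Conversely, if `L` simulates every `P ∈ 𝒫` via
`R_P`, then the union of the `R_P`, with the merged start state related to the start of `L`,
is a simulation of `L_𝒫` by `L`. Since simulation composes (couplings glue along their common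
marginal), `N ⪯ L_𝒫` would give `N ⪯ L`. -/

theorem PDist.prob_le_one {S : Type} [Fintype S] (μ : PDist S) (s : S) : μ.prob s ≤ 1 :=
  μ.sum_one ▸ single_le_sum (fun t _ => μ.nonneg t) (mem_univ s)

def PDist.map {S T : Type} [Fintype S] [Fintype T] [DecidableEq T] (f : S → T) (μ : PDist S) :
    PDist T where
  prob t := ∑ s, if f s = t then μ.prob s else 0
  nonneg t := sum_nonneg fun s _ => by split_ifs <;> simp [μ.nonneg s]
  sum_one := by simp only [sum_comm (γ := T), sum_ite_eq, mem_univ, if_true, μ.sum_one]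

section Map

variable {S T : Type} [Fintype S] [Fintype T] [DecidableEq T] {f : S → T}

theorem PDist.map_prob_apply (hf : f.Injective) (μ : PDist S) (s : S) :
    (μ.map f).prob (f s) = μ.prob s := by
  simp [PDist.map, hf.eq_iff]

theorem PDist.map_prob_eq_zero (μ : PDist S) {t : T} (ht : ∀ s, t ≠ f s) :
    (μ.map f).prob t = 0 :=
  sum_eq_zero fun s _ => if_neg (ht s).symm

end Map

section DistLe

variable {S₁ S₂ S₃ : Type} [Fintype S₁] [Fintype S₂] [Fintype S₃]

theorem DistLe.of_weight {R : S₁ → S₂ → Prop} {μ₁ : PDist S₁} {μ₂ : PDist S₂}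
    (w : S₁ → S₂ → ℚ) (hw : ∀ s₁ s₂, 0 ≤ w s₁ s₂) (h₁ : ∀ s₁, μ₁.prob s₁ = ∑ s₂, w s₁ s₂)
    (h₂ : ∀ s₂, μ₂.prob s₂ = ∑ s₁, w s₁ s₂) (hR : ∀ s₁ s₂, 0 < w s₁ s₂ → R s₁ s₂) :
    DistLe R μ₁ μ₂ := by
  refine ⟨w, fun s₁ s₂ => ⟨hw s₁ s₂, ?_⟩, h₁, h₂, hR⟩
  calc w s₁ s₂ ≤ ∑ t, w s₁ t := single_le_sum (fun t _ => hw s₁ t) (mem_univ s₂)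
    _ = μ₁.prob s₁ := (h₁ s₁).symm
    _ ≤ 1 := μ₁.prob_le_one s₁

theorem DistLe.mono {R R' : S₁ → S₂ → Prop} {μ₁ : PDist S₁} {μ₂ : PDist S₂}
    (h : DistLe R μ₁ μ₂) (hRR' : ∀ s₁ s₂, R s₁ s₂ → R' s₁ s₂) : DistLe R' μ₁ μ₂ := by
  obtain ⟨w, hw, h₁, h₂, hR⟩ := h
  exact ⟨w, hw, h₁, h₂, fun s₁ s₂ hpos => hRR' s₁ s₂ (hR s₁ s₂ hpos)⟩

theorem DistLe.flip {R : S₁ → S₂ → Prop} {μ₁ : PDist S₁} {μ₂ : PDist S₂}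
    (h : DistLe R μ₁ μ₂) : DistLe (fun s₂ s₁ => R s₁ s₂) μ₂ μ₁ := by
  obtain ⟨w, hw, h₁, h₂, hR⟩ := h
  exact ⟨fun s₂ s₁ => w s₁ s₂, fun s₂ s₁ => hw s₁ s₂, h₂, h₁, fun s₂ s₁ => hR s₁ s₂⟩

/-- Where `μ₂` vanishes so do both weights, so the junk value of division by zero is harmless. -/
theorem DistLe.comp {R₁ : S₁ → S₂ → Prop} {R₂ : S₂ → S₃ → Prop}
    {μ₁ : PDist S₁} {μ₂ : PDist S₂} {μ₃ : PDist S₃}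
    (h₁ : DistLe R₁ μ₁ μ₂) (h₂ : DistLe R₂ μ₂ μ₃) :
    DistLe (fun s₁ s₃ => ∃ s₂, R₁ s₁ s₂ ∧ R₂ s₂ s₃) μ₁ μ₃ := by
  obtain ⟨w₁, hw₁, hw₁l, hw₁r, hR₁⟩ := h₁
  obtain ⟨w₂, hw₂, hw₂l, hw₂r, hR₂⟩ := h₂
  have hw₁_zero : ∀ s₁ s₂, μ₂.prob s₂ = 0 → w₁ s₁ s₂ = 0 := fun s₁ s₂ h0 =>
    (sum_eq_zero_iff_of_nonneg fun t _ => (hw₁ t s₂).1).mp ((hw₁r s₂).symm.trans h0) s₁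
      (mem_univ _)
  have hw₂_zero : ∀ s₂ s₃, μ₂.prob s₂ = 0 → w₂ s₂ s₃ = 0 := fun s₂ s₃ h0 =>
    (sum_eq_zero_iff_of_nonneg fun t _ => (hw₂ s₂ t).1).mp ((hw₂l s₂).symm.trans h0) s₃
      (mem_univ _)
  have hterm_nonneg : ∀ s₁ s₂ s₃, 0 ≤ w₁ s₁ s₂ * w₂ s₂ s₃ / μ₂.prob s₂ := fun s₁ s₂ s₃ =>
    div_nonneg (mul_nonneg (hw₁ s₁ s₂).1 (hw₂ s₂ s₃).1) (μ₂.nonneg s₂)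
  refine .of_weight (fun s₁ s₃ => ∑ s₂, w₁ s₁ s₂ * w₂ s₂ s₃ / μ₂.prob s₂)
    (fun s₁ s₃ => sum_nonneg fun s₂ _ => hterm_nonneg s₁ s₂ s₃) (fun s₁ => ?_) (fun s₃ => ?_) ?_
  · rw [hw₁l, sum_comm]
    refine sum_congr rfl fun s₂ _ => ?_
    rw [← sum_div, ← mul_sum, ← hw₂l, mul_div_cancel_of_imp (hw₁_zero s₁ s₂)]
  · rw [hw₂r, sum_comm]
    refine sum_congr rfl fun s₂ _ => ?_
    rw [← sum_div, ← sum_mul, ← hw₁r, mul_div_cancel_left_of_imp (hw₂_zero s₂ s₃)]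
  · intro s₁ s₃ hpos
    obtain ⟨s₂, -, hterm⟩ := exists_ne_zero_of_sum_ne_zero hpos.ne'
    have h₁ : w₁ s₁ s₂ ≠ 0 := fun h => hterm (by simp [h])
    have h₂ : w₂ s₂ s₃ ≠ 0 := fun h => hterm (by simp [h])
    exact ⟨s₂, hR₁ s₁ s₂ ((hw₁ s₁ s₂).1.lt_of_ne' h₁), hR₂ s₂ s₃ ((hw₂ s₂ s₃).1.lt_of_ne' h₂)⟩

theorem distLe_of_injective [DecidableEq S₂] {f : S₁ → S₂} (hf : f.Injective)
    {μ : PDist S₁} {ν : PDist S₂} (hν : ∀ s, ν.prob (f s) = μ.prob s)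
    (hν_zero : ∀ t, (∀ s, t ≠ f s) → ν.prob t = 0) : DistLe (fun s t => f s = t) μ ν := by
  refine .of_weight (fun s t => if f s = t then μ.prob s else 0)
    (fun s t => by split_ifs <;> simp [μ.nonneg s]) (fun s => by simp) (fun t => ?_)
    (fun s t hpos => by_contra fun h => by simp [h] at hpos)
  by_cases ht : ∃ s, t = f s
  · obtain ⟨s, rfl⟩ := ht
    simp [hν, hf.eq_iff]
  · push Not at ht
    simp [hν_zero t ht, fun s => (ht s).symm]

end DistLe

theorem Sim.trans {S₁ S₂ S₃ A : Type} [Fintype S₁] [Fintype S₂] [Fintype S₃]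
    {L₁ : LPTS S₁ A} {L₂ : LPTS S₂ A} {L₃ : LPTS S₃ A}
    (h₁ : Sim L₁ L₂) (h₂ : Sim L₂ L₃) : Sim L₁ L₃ := by
  obtain ⟨R₁, hR₁, hstart₁⟩ := h₁
  obtain ⟨R₂, hR₂, hstart₂⟩ := h₂
  refine ⟨fun s₁ s₃ => ∃ s₂, R₁ s₁ s₂ ∧ R₂ s₂ s₃, ?_, ⟨L₂.start, hstart₁, hstart₂⟩⟩
  rintro s₁ s₃ ⟨s₂, h₁₂, h₂₃⟩ a μ₁ htr₁
  obtain ⟨μ₂, htr₂, hle₁₂⟩ := hR₁ s₁ s₂ h₁₂ a μ₁ htr₁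
  obtain ⟨μ₃, htr₃, hle₂₃⟩ := hR₂ s₂ s₃ h₂₃ a μ₂ htr₂
  exact ⟨μ₃, htr₃, hle₁₂.comp hle₂₃⟩

theorem inr_sigmaMk_injective {ι : Type} {St : ι → Type} (i : ι) :
    (fun s : St i => (Sum.inr ⟨i, s⟩ : Unit ⊕ Σ j, St j)).Injective :=
  Sum.inr_injective.comp sigma_mk_injective

def mergedSimRel {ι : Type} {St : ι → Type} {SL A : Type} [Fintype SL] (L : LPTS SL A)
    (R : ∀ i, St i → SL → Prop) (x : Unit ⊕ Σ j, St j) (t : SL) : Prop :=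
  (x = Sum.inl () ∧ t = L.start) ∨ ∃ i s, x = Sum.inr ⟨i, s⟩ ∧ R i s t

section Merged

variable {ι : Type} {St : ι → Type} [Fintype ι] [∀ i, Fintype (St i)] {A : Type}

theorem liftSum_map (i : ι) (μ : PDist (St i)) :
    liftSum i μ (μ.map fun s => Sum.inr ⟨i, s⟩) :=
  ⟨PDist.map_prob_apply (inr_sigmaMk_injective i) μ, fun _ => PDist.map_prob_eq_zero μ⟩

theorem distLe_of_liftSum {i : ι} {μ : PDist (St i)} {ν : PDist (Unit ⊕ Σ j, St j)}
    (h : liftSum i μ ν) : DistLe (fun s x => Sum.inr ⟨i, s⟩ = x) μ ν :=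
  distLe_of_injective (inr_sigmaMk_injective i) h.1 h.2

theorem sim_mergedLPTS (P : ∀ i, LPTS (St i) A) (i : ι) : Sim (P i) (mergedLPTS P) := by
  refine ⟨fun s x => (s = (P i).start ∧ x = Sum.inl ()) ∨ x = Sum.inr ⟨i, s⟩, ?_,
    Or.inl ⟨rfl, rfl⟩⟩
  intro s x hsx a μ htr
  refine ⟨μ.map fun s => Sum.inr ⟨i, s⟩, ⟨i, s, μ, htr, liftSum_map i μ, ?_⟩, ?_⟩
  · rcases hsx with ⟨hs, hx⟩ | hx
    exacts [Or.inl ⟨hx, hs⟩, Or.inr hx]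
  · exact (distLe_of_liftSum (liftSum_map i μ)).mono fun s x h => Or.inr h.symm

theorem mergedLPTS_sim {SL : Type} [Fintype SL] (P : ∀ i, LPTS (St i) A) (L : LPTS SL A)
    (hsim : ∀ i, Sim (P i) L) : Sim (mergedLPTS P) L := by
  choose R hR hstart using hsim
  refine ⟨mergedSimRel L R, ?_, Or.inl ⟨rfl, rfl⟩⟩
  rintro x t hxt a ν ⟨i, s, μ, htr, hlift, hx⟩
  have hst : R i s t := by
    rcases hx with ⟨rfl, rfl⟩ | rfl <;> rcases hxt with ⟨hx', rfl⟩ | ⟨i', s', hx', hst⟩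
    · exact hstart i
    · cases hx'
    · cases hx'
    · cases hx'
      exact hst
  obtain ⟨μ', htr', hle⟩ := hR i s t hst a μ htr
  refine ⟨μ', htr', ((distLe_of_liftSum hlift).flip.comp hle).mono ?_⟩
  rintro x t' ⟨s', rfl, hst'⟩
  exact Or.inr ⟨i, s', rfl, hst'⟩

end Merged

theorem merged_consistent_general {ι ιN : Type} [Fintype ι] [Fintype ιN]
    {St : ι → Type} [∀ i, Fintype (St i)] {StN : ιN → Type} [∀ j, Fintype (StN j)]
    {A : Type}
    (P : ∀ i, LPTS (St i) A)
    (N : ∀ j, LPTS (StN j) A)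
    (hcons : ∃ (SL : Type) (_ : Fintype SL) (L : LPTS SL A),
      (∀ i, Sim (P i) L) ∧ (∀ j, ¬ Sim (N j) L)) :
    (∀ i, Sim (P i) (mergedLPTS P)) ∧ (∀ j, ¬ Sim (N j) (mergedLPTS P)) := by
  obtain ⟨SL, _, L, hP, hN⟩ := hcons
  exact ⟨sim_mergedLPTS P, fun j hNj => hN j (hNj.trans (mergedLPTS_sim P L hP))⟩

/-- If some LPTS is consistent with the positive trees `P` and negative trees `N`, then
the merged LPTS `L_𝒫` is consistent with them as well. -/
theorem merged_consistent {ι ιN : Type} [Fintype ι] [Nonempty ι] [Fintype ιN]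
    {St : ι → Type} [∀ i, Fintype (St i)] {StN : ιN → Type} [∀ j, Fintype (StN j)]
    {A : Type}
    (P : ∀ i, LPTS (St i) A) (htree : ∀ i, IsTree (P i))
    (N : ∀ j, LPTS (StN j) A) (htreeN : ∀ j, IsTree (N j))
    (hcons : ∃ (SL : Type) (_ : Fintype SL) (L : LPTS SL A),
      (∀ i, Sim (P i) L) ∧ (∀ j, ¬ Sim (N j) L)) :
    (∀ i, Sim (P i) (mergedLPTS P)) ∧ (∀ j, ¬ Sim (N j) (mergedLPTS P)) :=
  merged_consistent_general P N hcons
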